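/- arXiv:1404.2183 — 3 statements merged into one kernel-verified Lean document; each statement's English description precedes it below -/
import Mathlib

section
/- For every positive integer n, n ≤ E(‖n‖); that is, E(k) is an upper bound for all positive integers of complexity at most k. -/
/-- `HasCpx n k` means the positive integer `n` can be written using exactly `k` ones,
additions and multiplications. -/
inductive HasCpx : ℕ → ℕ → Prop
  | one : HasCpx 1 1
  | add {a b j k : ℕ} : HasCpx a j → HasCpx b k → HasCpx (a + b) (j + k)
  | mul {a b j k : ℕ} : HasCpx a j → HasCpx b k → HasCpx (a * b) (j + k)

/-- The integer complexity `‖n‖`: the least number of 1's needed to write `n` using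
only `+` and `*`.  By convention (`sInf ∅ = 0` in `ℕ`) we have `cpx 0 = 0`. -/
noncomputable def cpx (n : ℕ) : ℕ := sInf {k | HasCpx n k}

/-- The function `E`: `E k` is the largest integer of complexity `k` (OEIS A000792),
with `E 0 = 1`.  It satisfies `E 0 = E 1 = 1`, `E 2 = 2`, and for `j ≥ 1`:
`E (3j) = 3^j`, `E (3j+1) = 4·3^(j-1)`, `E (3j+2) = 2·3^j`. -/
def E : ℕ → ℕ
  | 0 => 1
  | 1 => 1
  | 2 => 2
  | 3 => 3
  | 4 => 4
  | (n + 5) => 3 * E (n + 2)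

lemma E_succ_ge : ∀ k, 1 ≤ k → E k + 1 ≤ E (k+1)
  | 0, h => by omega
  | 1, _ => by decide
  | 2, _ => by decide
  | 3, _ => by decide
  | 4, _ => by decide
  | (m+5), _ => by
      have ih := E_succ_ge (m+2) (by omega)
      rw [show m+2+1 = m+3 from rfl] at ih
      have h1 : E (m+5) = 3 * E (m+2) := rfl
      have h2 : E (m+6) = 3 * E (m+3) := rfl
      show E (m+5) + 1 ≤ E (m+6)
      omega

lemma E_mono1 : ∀ k, E k ≤ E (k+1) := by
  intro k
  rcases Nat.eq_zero_or_pos k with h | h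
  · subst h; decide
  · have := E_succ_ge k h; omega

lemma E3 : ∀ k, 3 * E k ≤ E (k+3)
  | 0 => by decide
  | 1 => by decide
  | (m+2) => le_of_eq rfl

lemma E2 : ∀ k, 2 * E k ≤ E (k+2)
  | 0 => by decide
  | 1 => by decide
  | 2 => by decide
  | 3 => by decide
  | 4 => by decide
  | (m+5) => by
      have ih := E2 (m+2)
      rw [show m+2+2 = m+4 from rfl] at ih
      have h1 : E (m+5) = 3 * E (m+2) := rfl
      have h2 : E (m+7) = 3 * E (m+4) := rfl
      show 2 * E (m+5) ≤ E (m+7)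
      omega

lemma E4 : ∀ k, 4 * E k ≤ E (k+4) := by
  intro k
  have h1 := E2 k
  have h2 := E2 (k+2)
  have h3 : k+2+2 = k+4 := rfl
  rw [h3] at h2
  omega

lemma E_mul : ∀ j k, E j * E k ≤ E (j+k)
  | 0, k => by simp [E]
  | 1, k => by rw [Nat.add_comm]; simpa [E] using E_mono1 k
  | 2, k => by have := E2 k; rw [Nat.add_comm]; simpa [E] using this
  | 3, k => by have := E3 k; rw [Nat.add_comm]; simpa [E] using this
  | 4, k => by have := E4 k; rw [Nat.add_comm]; simpa [E] using this
  | (m+5), k => by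
      have ih := E_mul (m+2) k
      have h3 := E3 (m+2+k)
      have h1 : E (m+5) = 3 * E (m+2) := rfl
      have h2 : m+5+k = (m+2+k)+3 := by omega
      calc E (m+5) * E k = 3 * (E (m+2) * E k) := by rw [h1]; ring
        _ ≤ 3 * E (m+2+k) := by omega
        _ ≤ E (m+5+k) := by rw [h2]; exact h3

lemma E_pos : ∀ k, 1 ≤ E k
  | 0 => by decide
  | 1 => by decide
  | 2 => by decide
  | 3 => by decide
  | 4 => by decide
  | (m+5) => by
      have := E_pos (m+2)
      have h1 : E (m+5) = 3 * E (m+2) := rfl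
      omega

lemma E_ge2 : ∀ k, 2 ≤ k → 2 ≤ E k := by
  intro k hk
  induction k with
  | zero => omega
  | succ m ih =>
    rcases Nat.lt_or_ge m 2 with h | h
    · interval_cases m <;> simp_all [E]
    · have := E_mono1 m; have := ih (by omega); omega

lemma E_add : ∀ j k, 1 ≤ j → 1 ≤ k → E j + E k ≤ E (j+k) := by
  intro j k hj hk
  rcases Nat.lt_or_ge j 2 with h | h
  · have hj1 : j = 1 := by omega
    subst hj1
    have := E_succ_ge k hk
    simpa [E, Nat.add_comm] using this
  rcases Nat.lt_or_ge k 2 with h' | h'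
  · have hk1 : k = 1 := by omega
    subst hk1
    have := E_succ_ge j hj
    simpa [E] using this
  · have h2j := E_ge2 j h
    have h2k := E_ge2 k h'
    have := E_mul j k
    nlinarith

lemma hascpx_bound : ∀ {n k}, HasCpx n k → 1 ≤ k ∧ n ≤ E k := by
  intro n k h
  induction h with
  | one => exact ⟨le_refl 1, by decide⟩
  | add ha hb iha ihb =>
      exact ⟨by omega, le_trans (Nat.add_le_add iha.2 ihb.2) (E_add _ _ iha.1 ihb.1)⟩
  | mul ha hb iha ihb =>
      exact ⟨by omega, le_trans (Nat.mul_le_mul iha.2 ihb.2) (E_mul _ _)⟩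

lemma hascpx_self : ∀ n, 1 ≤ n → HasCpx n n
  | 0, h => by omega
  | 1, _ => HasCpx.one
  | (n+2), _ => by
      have h := HasCpx.add (hascpx_self (n+1) (by omega)) HasCpx.one
      exact h


/-- For every positive integer `n`, `n ≤ E ‖n‖`: `E k` bounds every positive integer
of complexity at most `k`. -/
theorem le_E_complexity (n : ℕ) (hn : 1 ≤ n) : n ≤ E (cpx n) := by
  have h : HasCpx n (cpx n) := Nat.sInf_mem ⟨n, hascpx_self n hn⟩
  exact (hascpx_bound h).2
end

section
/- For every integer n ≥ 29, one has 2·3^(‖n−1‖/6) < n (in particular n² − 4·3^(‖n−1‖/3) > 0), where the powers of 3 are real powers. -/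
/-!
Horner's scheme in base 2 (`2q = (1+1)·q`, `2q+1 = (1+1)·q + 1`) writes `m ≥ 2` with at most
`3 log₂ m` ones, i.e. `2^‖m‖ ≤ m³`. Raising `2·3^(‖m‖/6) < m + 1` to the power 102 turns it into
`2^102 · 3^(17‖m‖) < (m+1)^102`, which follows from `3^17 ≤ 2^27` and `2^102 < 29^21`.
-/

theorem HasCpx.two : HasCpx 2 2 := .add .one .one

theorem exists_hasCpx_two_pow_le_cube (m : ℕ) (hm : 2 ≤ m) :
    ∃ k, HasCpx m k ∧ 2 ^ k ≤ m ^ 3 := by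
  induction m using Nat.strong_induction_on with
  | _ m ih =>
  rcases Nat.lt_or_ge m 4 with hm4 | hm4
  · interval_cases m
    · exact ⟨2, .two, by norm_num⟩
    · exact ⟨3, .add .two .one, by norm_num⟩
  obtain ⟨q, hq⟩ := Nat.even_or_odd' m
  obtain ⟨k, hk, hbound⟩ := ih q (by omega) (by omega)
  have hdouble : 2 ^ (2 + k + 1) ≤ (2 * q) ^ 3 := by
    rw [show 2 ^ (2 + k + 1) = 8 * 2 ^ k by ring, show (2 * q) ^ 3 = 8 * q ^ 3 by ring]
    exact Nat.mul_le_mul_left 8 hbound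
  rcases hq with rfl | rfl
  · exact ⟨2 + k, .mul .two hk, (Nat.pow_le_pow_right two_pos (by omega)).trans hdouble⟩
  · exact ⟨2 + k + 1, .add (.mul .two hk) .one, hdouble.trans (Nat.pow_le_pow_left (by omega) 3)⟩

theorem two_pow_cpx_le_cube {m : ℕ} (hm : 2 ≤ m) : 2 ^ cpx m ≤ m ^ 3 := by
  obtain ⟨k, hk, hbound⟩ := exists_hasCpx_two_pow_le_cube m hm
  exact (Nat.pow_le_pow_right two_pos (Nat.sInf_le hk)).trans hbound

theorem two_pow_mul_three_pow_lt_pow {n c : ℕ} (hn : 29 ≤ n) (hc : 2 ^ c ≤ (n - 1) ^ 3) :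
    2 ^ 102 * 3 ^ (17 * c) < n ^ 102 :=
  calc 2 ^ 102 * 3 ^ (17 * c)
      = 2 ^ 102 * (3 ^ 17) ^ c := by rw [pow_mul]
    _ ≤ 2 ^ 102 * (2 ^ 27) ^ c := Nat.mul_le_mul_left _ (Nat.pow_le_pow_left (by norm_num) c)
    _ = 2 ^ 102 * (2 ^ c) ^ 27 := by rw [← pow_mul, ← pow_mul, mul_comm 27]
    _ ≤ 2 ^ 102 * (n ^ 3) ^ 27 :=
        Nat.mul_le_mul_left _ (Nat.pow_le_pow_left (hc.trans (Nat.pow_le_pow_left (by omega) 3)) 27)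
    _ < 29 ^ 21 * (n ^ 3) ^ 27 := by
        gcongr
        norm_num
    _ ≤ n ^ 21 * (n ^ 3) ^ 27 := by gcongr
    _ = n ^ 102 := by ring

/-- For `n ≥ 29`, `2·3^(‖n-1‖/6) < n`; in particular `n² - 4·3^(‖n-1‖/3) > 0`. -/
theorem two_rpow_lt (n : ℕ) (hn : 29 ≤ n) :
    2 * (3 : ℝ) ^ ((cpx (n - 1) : ℝ) / 6) < n ∧
    0 < (n : ℝ) ^ 2 - 4 * (3 : ℝ) ^ ((cpx (n - 1) : ℝ) / 3) := by
  set c := cpx (n - 1)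
  have hpow : ∀ k : ℕ, (2 * (3 : ℝ) ^ ((c : ℝ) / 6)) ^ k = 2 ^ k * 3 ^ ((c : ℝ) / 6 * k) := by
    intro k
    rw [mul_pow, Real.rpow_mul_natCast (by norm_num)]
  have hlt : 2 * (3 : ℝ) ^ ((c : ℝ) / 6) < n := by
    refine lt_of_pow_lt_pow_left₀ 102 n.cast_nonneg ?_
    rw [hpow, show (c : ℝ) / 6 * (102 : ℕ) = (17 * c : ℕ) by push_cast; ring, Real.rpow_natCast]
    exact_mod_cast two_pow_mul_three_pow_lt_pow hn (two_pow_cpx_le_cube (by omega))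
  refine ⟨hlt, ?_⟩
  have hsq := pow_lt_pow_left₀ hlt (by positivity) two_ne_zero
  rw [hpow, show (c : ℝ) / 6 * (2 : ℕ) = c / 3 by push_cast; ring] at hsq
  linarith
end

section
/- Let b ≥ 2 and let n ≥ 1 have base-b expansion n = r_k + r_{k−1}·b + r_{k−2}·b² + ⋯ + r_0·b^k with digits 0 ≤ r_j < b and leading digit r_0 ≥ 1. Then ‖n‖ ≤ ‖r_0‖ + Σ_{j=1}^{k} D(b, r_j). -/
/-- The digit cost `D b r`: the least `c` such that `‖b·n + r‖ ≤ ‖n‖ + c` for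
every positive integer `n`. -/
noncomputable def D (b r : ℕ) : ℕ :=
  sInf {c : ℕ | ∀ n : ℕ, 1 ≤ n → cpx (b * n + r) ≤ cpx n + c}


/-! Unfold the expansion by Horner's rule: the value of the digit string `r_0 … r_{k+1}` is
`b · m + r_{k+1}`, where `m ≥ 1` is the value of `r_0 … r_k`. By the definition of the digit
cost, `‖b·m + r_{k+1}‖ ≤ ‖m‖ + D(b, r_{k+1})`, and induction on `k` finishes the proof. -/

theorem HasCpx.pos {n k : ℕ} (h : HasCpx n k) : 0 < n := by
  induction h with
  | one => exact Nat.one_pos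
  | add _ _ ha _ => omega
  | mul _ _ ha hb => exact Nat.mul_pos ha hb

theorem hasCpx_self {n : ℕ} (hn : 0 < n) : HasCpx n n := by
  induction n with
  | zero => omega
  | succ m ih =>
    rcases Nat.eq_zero_or_pos m with rfl | hm
    · exact HasCpx.one
    · exact HasCpx.add (ih hm) HasCpx.one

@[simp]
theorem cpx_zero : cpx 0 = 0 := by
  have : {k | HasCpx 0 k} = ∅ :=
    Set.eq_empty_of_forall_notMem fun _ h => (HasCpx.pos h).false
  simp [cpx, this]

theorem hasCpx_cpx {n : ℕ} (hn : 0 < n) : HasCpx n (cpx n) :=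
  Nat.sInf_mem ⟨n, hasCpx_self hn⟩

theorem cpx_le_of_hasCpx {n k : ℕ} (h : HasCpx n k) : cpx n ≤ k :=
  Nat.sInf_le h

theorem cpx_add_le (a b : ℕ) : cpx (a + b) ≤ cpx a + cpx b := by
  rcases Nat.eq_zero_or_pos a with rfl | ha
  · simp
  rcases Nat.eq_zero_or_pos b with rfl | hb
  · simp
  exact cpx_le_of_hasCpx ((hasCpx_cpx ha).add (hasCpx_cpx hb))

theorem cpx_mul_le (a b : ℕ) : cpx (a * b) ≤ cpx a + cpx b := by
  rcases Nat.eq_zero_or_pos a with rfl | ha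
  · simp
  rcases Nat.eq_zero_or_pos b with rfl | hb
  · simp
  exact cpx_le_of_hasCpx ((hasCpx_cpx ha).mul (hasCpx_cpx hb))

/-- `D b r` is attained: `‖b‖ + ‖r‖` is an admissible cost, so the infimum is over a
nonempty set. -/
theorem cpx_mul_add_le_cpx_add_D (b r : ℕ) {n : ℕ} (hn : 1 ≤ n) :
    cpx (b * n + r) ≤ cpx n + D b r := by
  have admissible : ∀ m : ℕ, 1 ≤ m → cpx (b * m + r) ≤ cpx m + (cpx b + cpx r) := fun m _ =>
    calc cpx (b * m + r) ≤ cpx b + cpx m + cpx r :=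
          (cpx_add_le _ _).trans (Nat.add_le_add_right (cpx_mul_le _ _) _)
      _ = cpx m + (cpx b + cpx r) := by ring
  exact Nat.sInf_mem (s := {c | ∀ m : ℕ, 1 ≤ m → cpx (b * m + r) ≤ cpx m + c})
    ⟨_, admissible⟩ n hn

theorem sum_range_succ_mul_pow_sub (b k : ℕ) (r : ℕ → ℕ) :
    ∑ j ∈ Finset.range (k + 2), r j * b ^ (k + 1 - j) =
      b * ∑ j ∈ Finset.range (k + 1), r j * b ^ (k - j) + r (k + 1) := by
  rw [Finset.sum_range_succ, Finset.mul_sum, Nat.sub_self, pow_zero, mul_one]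
  congr 1
  refine Finset.sum_congr rfl fun j hj => ?_
  rw [Nat.sub_add_comm (Finset.mem_range_succ_iff.mp hj), pow_succ]
  ring

theorem sum_range_mul_pow_sub_pos {b : ℕ} (hb : 0 < b) (k : ℕ) {r : ℕ → ℕ} (h₀ : 0 < r 0) :
    0 < ∑ j ∈ Finset.range (k + 1), r j * b ^ (k - j) :=
  lt_of_lt_of_le (Nat.mul_pos h₀ (Nat.pow_pos hb))
    (Finset.single_le_sum (f := fun j => r j * b ^ (k - j)) (fun _ _ => Nat.zero_le _)
      (Finset.mem_range.mpr k.succ_pos))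

theorem complexity_le_base_expansion_general (b k n : ℕ) (r : ℕ → ℕ) (hb : 2 ≤ b)
    (hlead : 1 ≤ r 0)
    (hn : n = ∑ j ∈ Finset.range (k + 1), r j * b ^ (k - j)) :
    cpx n ≤ cpx (r 0) + ∑ j ∈ Finset.Icc 1 k, D b (r j) := by
  subst hn
  induction k with
  | zero => simp
  | succ k ih =>
    have hm := sum_range_mul_pow_sub_pos (by omega : 0 < b) k hlead
    calc cpx (∑ j ∈ Finset.range (k + 2), r j * b ^ (k + 1 - j))
        = cpx (b * ∑ j ∈ Finset.range (k + 1), r j * b ^ (k - j) + r (k + 1)) := by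
          rw [sum_range_succ_mul_pow_sub]
      _ ≤ cpx (∑ j ∈ Finset.range (k + 1), r j * b ^ (k - j)) + D b (r (k + 1)) :=
          cpx_mul_add_le_cpx_add_D b _ hm
      _ ≤ cpx (r 0) + ∑ j ∈ Finset.Icc 1 k, D b (r j) + D b (r (k + 1)) :=
          Nat.add_le_add_right ih _
      _ = cpx (r 0) + ∑ j ∈ Finset.Icc 1 (k + 1), D b (r j) := by
          rw [Finset.sum_Icc_succ_top (by omega), add_assoc]

/-- If `n ≥ 1` has base-`b` expansion `n = ∑_{j=0}^{k} r_j · b^(k-j)` with digits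
`0 ≤ r_j < b` and leading digit `r_0 ≥ 1`, then `‖n‖ ≤ ‖r_0‖ + ∑_{j=1}^{k} D(b, r_j)`. -/
theorem complexity_le_base_expansion (b k n : ℕ) (r : ℕ → ℕ) (hb : 2 ≤ b)
    (hdig : ∀ j ≤ k, r j < b) (hlead : 1 ≤ r 0)
    (hn : n = ∑ j ∈ Finset.range (k + 1), r j * b ^ (k - j)) :
    cpx n ≤ cpx (r 0) + ∑ j ∈ Finset.Icc 1 k, D b (r j) :=
  complexity_le_base_expansion_general b k n r hb hlead hn
end
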